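/- arXiv:1412.7591 — 6 statements merged into one kernel-verified Lean document; each statement's English description precedes it below -/
import Mathlib

section
/- In the pre-Bloch group P(F) of an algebraically closed field F, for every z in F \ {0,1}, one has [1-z] = -[z]. -/
/-- The set of "admissible" generators: elements of `F \ {0,1}`. -/
abbrev PBG (F : Type*) [Field F] : Type _ := {z : F // z ≠ 0 ∧ z ≠ 1}

/-- The subgroup of five-term relations in the free abelian group on `F \ {0,1}`. -/
def fiveTermRels (F : Type*) [Field F] : AddSubgroup (FreeAbelianGroup (PBG F)) :=
  AddSubgroup.closure
    { r | ∃ x y a b c : PBG F, x ≠ y ∧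
        (a : F) = (y : F) / (x : F) ∧
        (b : F) = (1 - (x : F)⁻¹) / (1 - (y : F)⁻¹) ∧
        (c : F) = (1 - (x : F)) / (1 - (y : F)) ∧
        r = FreeAbelianGroup.of x - FreeAbelianGroup.of y + FreeAbelianGroup.of a
            - FreeAbelianGroup.of b + FreeAbelianGroup.of c }

/-- The pre-Bloch group `P(F)`. -/
abbrev preBloch (F : Type*) [Field F] :=
  FreeAbelianGroup (PBG F) ⧸ fiveTermRels F

/-- The class `[z]` of a generator in the pre-Bloch group. -/
def pb {F : Type*} [Field F] (z : PBG F) : preBloch F :=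
  QuotientAddGroup.mk (FreeAbelianGroup.of z)

section Aux

variable {F : Type*} [Field F]

lemma pb_fiveTerm (x y a b c : PBG F) (hxy : x ≠ y)
    (ha : (a : F) = (y : F) / (x : F))
    (hb : (b : F) = (1 - (x : F)⁻¹) / (1 - (y : F)⁻¹))
    (hc : (c : F) = (1 - (x : F)) / (1 - (y : F))) :
    pb x - pb y + pb a - pb b + pb c = 0 := by
  have hmem : FreeAbelianGroup.of x - FreeAbelianGroup.of y + FreeAbelianGroup.of a
      - FreeAbelianGroup.of b + FreeAbelianGroup.of c ∈ fiveTermRels F :=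
    AddSubgroup.subset_closure ⟨x, y, a, b, c, hxy, ha, hb, hc, rfl⟩
  have h2 := (QuotientAddGroup.eq_zero_iff _).mpr hmem
  simpa [pb, QuotientAddGroup.mk_add, QuotientAddGroup.mk_sub] using h2

lemma psi_mul (u v w ui vi wi : PBG F)
    (hw : (w : F) = (u : F) * (v : F))
    (hui : (ui : F) = (u : F)⁻¹) (hvi : (vi : F) = (v : F)⁻¹)
    (hwi : (wi : F) = (w : F)⁻¹) :
    pb w + pb wi = pb u + pb ui + (pb v + pb vi) := by
  obtain ⟨hu0, hu1⟩ := u.2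
  obtain ⟨hv0, hv1⟩ := v.2
  have hw1 : (u : F) * (v : F) ≠ 1 := hw ▸ w.2.2
  have hD : (v : F) * (u : F) - 1 ≠ 0 := sub_ne_zero.mpr (by rwa [mul_comm])
  have hN : (v : F) - 1 ≠ 0 := sub_ne_zero.mpr v.2.2
  set xv : F := ((v : F) - 1) / ((v : F) * (u : F) - 1) with hxv
  have hx0 : xv ≠ 0 := div_ne_zero hN hD
  have hx1 : xv ≠ 1 := by
    intro h
    have h2 := (div_eq_one_iff_eq hD).mp h
    have h3 : (v : F) * 1 = (v : F) * (u : F) := by linear_combination h2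
    exact hu1 (mul_left_cancel₀ hv0 h3).symm
  set yv : F := (u : F) * xv with hyv
  have hy0 : yv ≠ 0 := mul_ne_zero hu0 hx0
  have hy1 : yv ≠ 1 := by
    intro h
    rw [hyv, hxv, mul_div_assoc'] at h
    have h2 := (div_eq_one_iff_eq hD).mp h
    exact hu1 (by linear_combination -h2)
  have hxy : xv ≠ yv := by
    intro h
    rw [hyv] at h
    have h3 : (1 : F) * xv = (u : F) * xv := by rw [one_mul]; exact h
    exact hu1 (mul_right_cancel₀ hx0 h3).symm
  have h1mx : 1 - xv ≠ 0 := sub_ne_zero.mpr (Ne.symm hx1)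
  have h1my : 1 - yv ≠ 0 := sub_ne_zero.mpr (Ne.symm hy1)
  have hxinv : xv⁻¹ = ((v : F) * (u : F) - 1) / ((v : F) - 1) := by
    rw [hxv, inv_div]
  have hyinv : yv⁻¹ = ((v : F) * (u : F) - 1) / ((u : F) * ((v : F) - 1)) := by
    rw [hyv, hxv, mul_div_assoc', inv_div]
  have hbx : (1 : F) - xv⁻¹ ≠ 0 := by
    rw [sub_ne_zero]
    exact fun h => hx1 (by rwa [eq_comm, inv_eq_one] at h)
  have hby : (1 : F) - yv⁻¹ ≠ 0 := by
    rw [sub_ne_zero]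
    exact fun h => hy1 (by rwa [eq_comm, inv_eq_one] at h)
  set X : PBG F := ⟨xv, hx0, hx1⟩
  set Y : PBG F := ⟨yv, hy0, hy1⟩
  have hXY : X ≠ Y := fun h => hxy (congrArg Subtype.val h)
  have eq1 := pb_fiveTerm X Y u w v hXY
    (by show (u : F) = yv / xv; rw [hyv]; field_simp)
    (by show (w : F) = (1 - xv⁻¹) / (1 - yv⁻¹)
        rw [hw, eq_div_iff hby, hxinv, hyinv]; field_simp; ring)
    (by show (v : F) = (1 - xv) / (1 - yv)
        rw [eq_div_iff h1my, hyv, hxv]; field_simp; ring)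
  have eq2 := pb_fiveTerm Y X ui wi vi (Ne.symm hXY)
    (by show (ui : F) = xv / yv; rw [hui, hyv]; field_simp)
    (by show (wi : F) = (1 - yv⁻¹) / (1 - xv⁻¹)
        rw [hwi, hw, eq_div_iff hbx, hxinv, hyinv]; field_simp; ring)
    (by show (vi : F) = (1 - yv) / (1 - xv)
        rw [hvi, eq_div_iff h1mx, hyv, hxv]; field_simp; ring)
  have hsum : (pb X - pb Y + pb u - pb w + pb v)
      + (pb Y - pb X + pb ui - pb wi + pb vi) = 0 := by rw [eq1, eq2, add_zero]
  have key : pb u + pb ui + (pb v + pb vi) - (pb w + pb wi) = 0 := by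
    rw [← hsum]; abel
  exact (sub_eq_zero.mp key).symm

lemma psi_two [Infinite F] (b bi : PBG F) (hbi : (bi : F) = (b : F)⁻¹) :
    (pb b + pb bi) + (pb b + pb bi) = 0 := by
  classical
  obtain ⟨hb0, hb1⟩ := b.2
  obtain ⟨a, ha⟩ := Infinite.exists_notMem_finset ({0, 1, (b : F)⁻¹} : Finset F)
  simp only [Finset.mem_insert, Finset.mem_singleton, not_or] at ha
  obtain ⟨ha0, ha1, hab'⟩ := ha
  have hab1 : a * (b : F) ≠ 1 := fun h => hab' (eq_inv_of_mul_eq_one_left h)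
  have hab0 : a * (b : F) ≠ 0 := mul_ne_zero ha0 hb0
  have hai0 : a⁻¹ ≠ 0 := inv_ne_zero ha0
  have hai1 : a⁻¹ ≠ 1 := fun h => ha1 (by rwa [inv_eq_one] at h)
  have habi0 : (a * (b : F))⁻¹ ≠ 0 := inv_ne_zero hab0
  have habi1 : (a * (b : F))⁻¹ ≠ 1 := fun h => hab1 (by rwa [inv_eq_one] at h)
  have hbi0 : (b : F)⁻¹ ≠ 0 := inv_ne_zero hb0
  set A : PBG F := ⟨a, ha0, ha1⟩
  set Ai : PBG F := ⟨a⁻¹, hai0, hai1⟩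
  set AB : PBG F := ⟨a * (b : F), hab0, hab1⟩
  set ABi : PBG F := ⟨(a * (b : F))⁻¹, habi0, habi1⟩
  have e1 : pb AB + pb ABi = pb A + pb Ai + (pb b + pb bi) :=
    psi_mul A b AB Ai bi ABi rfl rfl hbi rfl
  have e2 : pb A + pb Ai = pb AB + pb ABi + (pb bi + pb b) :=
    psi_mul AB bi A ABi b Ai
      (by show a = a * (b : F) * (bi : F); rw [hbi]; field_simp)
      rfl
      (by show (b : F) = (bi : F)⁻¹; rw [hbi, inv_inv])
      rfl
  have key : (pb b + pb bi) + (pb b + pb bi) - 0 = 0 := by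
    rw [show (0 : preBloch F) = (pb A + pb Ai) - (pb A + pb Ai) by abel]
    nth_rewrite 1 [e2]
    rw [e1]
    abel
  simpa using key

lemma psi_zero [IsAlgClosed F] (b bi : PBG F) (hbi : (bi : F) = (b : F)⁻¹) :
    pb b + pb bi = 0 := by
  obtain ⟨hb0, hb1⟩ := b.2
  obtain ⟨s, hs⟩ := IsAlgClosed.exists_pow_nat_eq (b : F) (n := 2) (by norm_num)
  have hs0 : s ≠ 0 := fun h => hb0 (by rw [← hs, h]; ring)
  have hs1 : s ≠ 1 := fun h => hb1 (by rw [← hs, h]; ring)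
  have hsi0 : s⁻¹ ≠ 0 := inv_ne_zero hs0
  have hsi1 : s⁻¹ ≠ 1 := fun h => hs1 (by rwa [inv_eq_one] at h)
  set S : PBG F := ⟨s, hs0, hs1⟩
  set Si : PBG F := ⟨s⁻¹, hsi0, hsi1⟩
  have e1 : pb b + pb bi = pb S + pb Si + (pb S + pb Si) :=
    psi_mul S S b Si Si bi (by show (b : F) = s * s; rw [← hs]; ring) rfl rfl
      (by show (bi : F) = (b : F)⁻¹; exact hbi)
  rw [e1]
  exact psi_two S Si rfl

lemma phi_const (x y x1 y1 : PBG F)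
    (hx1 : (x1 : F) = 1 - (x : F)) (hy1 : (y1 : F) = 1 - (y : F)) :
    pb x + pb x1 = pb y + pb y1 := by
  rcases eq_or_ne x y with h | hxy
  · subst h
    have : x1 = y1 := Subtype.ext (hx1.trans hy1.symm)
    rw [this]
  obtain ⟨hx0, hxo⟩ := x.2
  obtain ⟨hy0, hyo⟩ := y.2
  have hvne : (x : F) ≠ (y : F) := fun h => hxy (Subtype.ext h)
  have h1mx : 1 - (x : F) ≠ 0 := sub_ne_zero.mpr (Ne.symm hxo)
  have h1my : 1 - (y : F) ≠ 0 := sub_ne_zero.mpr (Ne.symm hyo)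
  have hxi : 1 - (x : F)⁻¹ ≠ 0 := by
    rw [sub_ne_zero]; exact fun h => hxo (by rwa [eq_comm, inv_eq_one] at h)
  have hyi : 1 - (y : F)⁻¹ ≠ 0 := by
    rw [sub_ne_zero]; exact fun h => hyo (by rwa [eq_comm, inv_eq_one] at h)
  have ha0 : (y : F) / (x : F) ≠ 0 := div_ne_zero hy0 hx0
  have ha1 : (y : F) / (x : F) ≠ 1 := fun h => hvne ((div_eq_one_iff_eq hx0).mp h).symm
  have hb0 : (1 - (x : F)⁻¹) / (1 - (y : F)⁻¹) ≠ 0 := div_ne_zero hxi hyi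
  have hb1 : (1 - (x : F)⁻¹) / (1 - (y : F)⁻¹) ≠ 1 := by
    intro h
    have h2 := (div_eq_one_iff_eq hyi).mp h
    have h3 : (x : F)⁻¹ = (y : F)⁻¹ := by linear_combination -h2
    exact hvne (inv_injective h3)
  have hc0 : (1 - (x : F)) / (1 - (y : F)) ≠ 0 := div_ne_zero h1mx h1my
  have hc1 : (1 - (x : F)) / (1 - (y : F)) ≠ 1 := by
    intro h
    have h2 := (div_eq_one_iff_eq h1my).mp h
    exact hvne (by linear_combination -h2)
  set A : PBG F := ⟨(y : F) / (x : F), ha0, ha1⟩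
  set B : PBG F := ⟨(1 - (x : F)⁻¹) / (1 - (y : F)⁻¹), hb0, hb1⟩
  set C : PBG F := ⟨(1 - (x : F)) / (1 - (y : F)), hc0, hc1⟩
  have eq1 := pb_fiveTerm x y A B C hxy rfl rfl rfl
  have hne2 : y1 ≠ x1 := by
    intro h
    apply hxy
    apply Subtype.ext
    have := congrArg Subtype.val h
    rw [hy1, hx1] at this
    linear_combination this
  have eq2 := pb_fiveTerm y1 x1 C B A hne2
    (by show (C : F) = (x1 : F) / (y1 : F); rw [hx1, hy1])
    (by show (B : F) = (1 - (y1 : F)⁻¹) / (1 - (x1 : F)⁻¹)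
        rw [hx1, hy1]
        show (1 - (x : F)⁻¹) / (1 - (y : F)⁻¹) = _
        rw [div_eq_div_iff hyi]
        · field_simp
          ring
        · rw [sub_ne_zero]
          intro h
          apply hx0
          have h2 : (1 : F) - (x : F) = 1 := by
            rw [← inv_inv ((1 : F) - (x : F)), ← h, inv_one]
          linear_combination -h2)
    (by show (A : F) = (1 - (y1 : F)) / (1 - (x1 : F))
        rw [hx1, hy1]
        show (y : F) / (x : F) = _
        congr 1 <;> ring)
  have key : pb x + pb x1 - (pb y + pb y1) = 0 := by
    have hsum : (pb x - pb y + pb A - pb B + pb C)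
        - (pb y1 - pb x1 + pb C - pb B + pb A) = 0 := by rw [eq1, eq2, sub_zero]
    rw [← hsum]; abel
  exact sub_eq_zero.mp key

open Polynomial in
lemma exists_sq_sub_self_add_one_eq_zero (F : Type*) [Field F] [IsAlgClosed F] :
    ∃ α : F, α ^ 2 - α + 1 = 0 := by
  obtain ⟨α, hα⟩ := IsAlgClosed.exists_root (p := C 1 * X ^ 2 + C (-1) * X + C (1 : F))
    (by rw [Polynomial.degree_quadratic one_ne_zero]; norm_num)
  refine ⟨α, ?_⟩
  have := hα
  simp [Polynomial.IsRoot] at this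
  linear_combination this

end Aux

/-- In the pre-Bloch group of an algebraically closed field, `[1-z] = -[z]`. -/
theorem preBloch_one_sub (F : Type*) [Field F] [IsAlgClosed F]
    (z w : PBG F) (hw : (w : F) = 1 - (z : F)) :
    pb w = - pb z := by
  obtain ⟨α, hα2⟩ := exists_sq_sub_self_add_one_eq_zero F
  have hα0 : α ≠ 0 := by
    intro h; rw [h] at hα2; norm_num at hα2
  have hα1 : α ≠ 1 := by
    intro h; rw [h] at hα2; norm_num at hα2
  have hαi0 : 1 - α ≠ 0 := sub_ne_zero.mpr (Ne.symm hα1)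
  have hαi1 : 1 - α ≠ 1 := fun h => hα0 (by linear_combination -h)
  set A : PBG F := ⟨α, hα0, hα1⟩
  set Ai : PBG F := ⟨1 - α, hαi0, hαi1⟩
  have hinv : ((Ai : F)) = (A : F)⁻¹ := by
    show 1 - α = α⁻¹
    refine eq_inv_of_mul_eq_one_left ?_
    linear_combination -hα2
  have h1 : pb z + pb w = pb A + pb Ai := phi_const z A w Ai hw rfl
  have h2 : pb A + pb Ai = 0 := psi_zero A Ai hinv
  have h3 : pb z + pb w = 0 := h1.trans h2
  linear_combination (norm := abel) h3
end

section
/- Let T = ([x_i],[f_i])_{1≤i≤4} be a generic tetrahedron of flags in CP² with edge coordinates z_{ij} and face coordinates z_{ijk}. Then for each even permutation (i,j,k,l) of (1,2,3,4), z_{ijk} = - z_{il} z_{jl} z_{kl}. -/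
/-- Pairing of a covector and a vector in `ℂ³`. -/
noncomputable def dot (f x : Fin 3 → ℂ) : ℂ := ∑ t, f t * x t

/-- Determinant of three vectors of `ℂ³` (as rows). -/
noncomputable def det3 (a b c : Fin 3 → ℂ) : ℂ := Matrix.det (Matrix.of ![a, b, c])

/-- A generic tetrahedron of flags in `ℂP²`: four points `[xᵢ]` and four
lines `[fᵢ]` with `fᵢ(xᵢ) = 0`, `fᵢ(xⱼ) ≠ 0` for `i ≠ j`, and no three of
the points collinear. -/
structure FlagTetra where
  x : Fin 4 → Fin 3 → ℂ
  f : Fin 4 → Fin 3 → ℂ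
  flag : ∀ i, dot (f i) (x i) = 0
  generic_pairing : ∀ i j, i ≠ j → dot (f i) (x j) ≠ 0
  generic_pts : ∀ i j k : Fin 4, i ≠ j → j ≠ k → i ≠ k → det3 (x i) (x j) (x k) ≠ 0

/-- A very generic tetrahedron of flags: in addition no three of the
lines `[fᵢ]` are concurrent. -/
structure VGTetra extends FlagTetra where
  generic_lines : ∀ i j k : Fin 4, i ≠ j → j ≠ k → i ≠ k → det3 (f i) (f j) (f k) ≠ 0

/-- The edge coordinate `z_{ij}(T)`, computed with respect to an even
permutation `(i,j,k,l)` of the vertices: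
`z_{ij} = (fᵢ(x_k)·det(xᵢ,xⱼ,x_l)) / (fᵢ(x_l)·det(xᵢ,xⱼ,x_k))`. -/
noncomputable def zEdge (T : FlagTetra) (i j k l : Fin 4) : ℂ :=
  (dot (T.f i) (T.x k) * det3 (T.x i) (T.x j) (T.x l)) /
    (dot (T.f i) (T.x l) * det3 (T.x i) (T.x j) (T.x k))

/-- The face coordinate (triple ratio) `z_{ijk}(T)`. -/
noncomputable def zFace (T : FlagTetra) (i j k : Fin 4) : ℂ :=
  (dot (T.f i) (T.x j) * dot (T.f j) (T.x k) * dot (T.f k) (T.x i)) /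
    (dot (T.f i) (T.x k) * dot (T.f j) (T.x i) * dot (T.f k) (T.x j))

/-- The edge coordinate `z*_{ij}` of the dual tetrahedron `T*`, obtained by
replacing each flag `([x],[f])` by `([f],[x])` in the dual projective plane. -/
noncomputable def zEdgeDual (T : FlagTetra) (i j k l : Fin 4) : ℂ :=
  (dot (T.f k) (T.x i) * det3 (T.f i) (T.f j) (T.f l)) /
    (dot (T.f l) (T.x i) * det3 (T.f i) (T.f j) (T.f k))

lemma det3_comm_13 (a b c : Fin 3 → ℂ) : det3 a b c = -det3 c b a := by
  simp only [det3, Matrix.det_fin_three, Matrix.of_apply, Matrix.cons_val', Matrix.cons_val_fin_one,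
    Matrix.cons_val_zero, Matrix.cons_val_one, Matrix.cons_val]
  ring

namespace FlagTetra

variable (T : FlagTetra) {i j k l : Fin 4}

/-- Each determinant `det(xₐ, x_l, x_b)` occurs once in a numerator and once, with its outer rows
swapped, in a denominator; so the determinants cancel up to `(-1)³` and the pairings left over
form the triple ratio. -/
theorem zEdge_mul_zEdge_mul_zEdge (hij : i ≠ j) (hjk : j ≠ k) (hki : k ≠ i)
    (hil : i ≠ l) (hjl : j ≠ l) (hkl : k ≠ l) :
    zEdge T i l j k * zEdge T j l k i * zEdge T k l i j = -zFace T i j k := by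
  have hA : det3 (T.x i) (T.x l) (T.x j) ≠ 0 := T.generic_pts _ _ _ hil hjl.symm hij
  have hB : det3 (T.x j) (T.x l) (T.x k) ≠ 0 := T.generic_pts _ _ _ hjl hkl.symm hjk
  have hC : det3 (T.x k) (T.x l) (T.x i) ≠ 0 := T.generic_pts _ _ _ hkl hil.symm hki
  rw [zEdge, zEdge, zEdge, zFace, det3_comm_13 (T.x i) (T.x l) (T.x k),
    det3_comm_13 (T.x j) (T.x l) (T.x i), det3_comm_13 (T.x k) (T.x l) (T.x j)]
  set A := det3 (T.x i) (T.x l) (T.x j)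
  set B := det3 (T.x j) (T.x l) (T.x k)
  set C := det3 (T.x k) (T.x l) (T.x i)
  calc _ = -(dot (T.f i) (T.x j) * dot (T.f j) (T.x k) * dot (T.f k) (T.x i)) * (A * B * C) /
        (dot (T.f i) (T.x k) * dot (T.f j) (T.x i) * dot (T.f k) (T.x j) * (A * B * C)) := by
        ring
    _ = _ := by rw [mul_div_mul_right _ _ (by positivity), neg_div]

end FlagTetra

theorem zFace_eq_neg_prod_zEdge_general (T : FlagTetra) (σ : Equiv.Perm (Fin 4)) :
    zFace T (σ 0) (σ 1) (σ 2) =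
      -(zEdge T (σ 0) (σ 3) (σ 1) (σ 2) * zEdge T (σ 1) (σ 3) (σ 2) (σ 0) *
        zEdge T (σ 2) (σ 3) (σ 0) (σ 1)) := by
  have hσ {m n : Fin 4} (h : m ≠ n) : σ m ≠ σ n := σ.injective.ne h
  rw [T.zEdge_mul_zEdge_mul_zEdge (hσ (by decide)) (hσ (by decide)) (hσ (by decide))
    (hσ (by decide)) (hσ (by decide)) (hσ (by decide)), neg_neg]

/-- The face coordinate is the opposite of the product of the edge coordinates
leaving the face: for each even permutation `(i,j,k,l)` of the vertices,
`z_{ijk} = - z_{il} z_{jl} z_{kl}`. -/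
theorem zFace_eq_neg_prod_zEdge (T : FlagTetra) (σ : Equiv.Perm (Fin 4))
    (hσ : σ.sign = 1) :
    zFace T (σ 0) (σ 1) (σ 2) =
      -(zEdge T (σ 0) (σ 3) (σ 1) (σ 2) * zEdge T (σ 1) (σ 3) (σ 2) (σ 0) *
        zEdge T (σ 2) (σ 3) (σ 0) (σ 1)) :=
  zFace_eq_neg_prod_zEdge_general T σ
end

section
/- Let ([x_i],[f_i])_{1≤i≤3} be a generic triple of flags in CP² with triple ratio z₁₂₃, and set l_i = ker f_i. On the projective line l₂ consider the four distinct points l₁∩l₂, l₂∩l₃, x₂, l₂∩(x₁x₃) (the last being the intersection of l₂ with the line through x₁ and x₃). Then -z₁₂₃ = X(l₁∩l₂, l₂∩l₃, x₂, l₂∩x₁x₃) and 1 + z₁₂₃ = X(l₁∩l₂, x₂, l₃∩l₂, l₂∩x₁x₃), where X denotes the cross-ratio on the projective line l₂. -/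
/-- `2×2` determinant of two homogeneous parameters. -/
noncomputable def det2 (p q : ℂ × ℂ) : ℂ := p.1 * q.2 - q.1 * p.2

/-- Cross-ratio of four points of a projective line given in homogeneous
coordinates: the value at the fourth point of the Möbius map sending the first
to `∞`, the second to `0` and the third to `1`. -/
noncomputable def crossRatioH (p₁ p₂ p₃ p₄ : ℂ × ℂ) : ℂ :=
  det2 p₁ p₃ * det2 p₂ p₄ / (det2 p₁ p₄ * det2 p₂ p₃)

/-- Parametrization of the projective line `l₂ = ker f₂ = ker (1,0,-1)` of the
standard generic triple of flags `([1,0,0],[0,1,-1]), ([0,1,0],[1,0,-1]),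
([0,0,1],[z,1,0])` (to which any generic triple with triple ratio `z` can be
moved by projective invariance). -/
noncomputable def embL2 (p : ℂ × ℂ) : Fin 3 → ℂ := ![p.1, p.2, p.1]

/-- For a generic triple of flags (in standard form) with triple ratio `z`,
on the line `l₂` one has `-z₁₂₃ = X(l₁∩l₂, l₂∩l₃, x₂, l₂∩x₁x₃)` and
`1 + z₁₂₃ = X(l₁∩l₂, x₂, l₃∩l₂, l₂∩x₁x₃)`. -/
theorem tripleRatio_as_crossRatio (z : ℂ) (hz0 : z ≠ 0) (hz1 : z ≠ -1)
    (p₁ p₂ p₃ p₄ : ℂ × ℂ)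
    (h₁ : p₁ ≠ (0, 0)) (h₂ : p₂ ≠ (0, 0)) (h₃ : p₃ ≠ (0, 0)) (h₄ : p₄ ≠ (0, 0))
    -- `p₁` is the point `l₁ ∩ l₂` : it lies on `l₁ = ker (0,1,-1)`
    (hp₁ : dot ![0, 1, -1] (embL2 p₁) = 0)
    -- `p₂` is the point `l₂ ∩ l₃` : it lies on `l₃ = ker (z,1,0)`
    (hp₂ : dot ![z, 1, 0] (embL2 p₂) = 0)
    -- `p₃` is the point `x₂ = [0,1,0]` of `l₂`
    (hp₃ : ∃ c : ℂˣ, embL2 p₃ = (c : ℂ) • ![0, 1, 0])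
    -- `p₄` is the point `l₂ ∩ x₁x₃` : it lies on the line `x₁x₃ = ker (0,1,0)`
    (hp₄ : dot ![0, 1, 0] (embL2 p₄) = 0) :
    -z = crossRatioH p₁ p₂ p₃ p₄ ∧ 1 + z = crossRatioH p₁ p₃ p₂ p₄ := by
  obtain ⟨c, hc⟩ := hp₃
  simp only [dot, embL2, Fin.sum_univ_three, Matrix.cons_val_zero, Matrix.cons_val_one,
    Matrix.head_cons, Matrix.cons_val_two, Matrix.tail_cons] at hp₁ hp₂ hp₄
  have h31 : p₃.1 = 0 := by
    have := congrFun hc 0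
    simpa [embL2] using this
  have h32 : p₃.2 = (c : ℂ) := by
    have := congrFun hc 1
    simpa [embL2] using this
  have e1 : p₁.2 = p₁.1 := by linear_combination hp₁
  have e2 : p₂.2 = -z * p₂.1 := by linear_combination hp₂
  have e4 : p₄.2 = 0 := by linear_combination hp₄
  have n1 : p₁.1 ≠ 0 := by
    intro h; exact h₁ (Prod.ext h (by rw [e1, h]))
  have n2 : p₂.1 ≠ 0 := by
    intro h; exact h₂ (Prod.ext h (by rw [e2, h]; ring))
  have n4 : p₄.1 ≠ 0 := by
    intro h; exact h₄ (Prod.ext h e4)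
  have nc : (c : ℂ) ≠ 0 := c.ne_zero
  have hz1' : z + 1 ≠ 0 := by
    intro h; exact hz1 (by linear_combination h)
  constructor <;>
  · simp only [crossRatioH, det2, e1, e2, e4, h31, h32]
    field_simp
    ring
end

section
/- Let T be a very generic tetrahedron of flags in CP² with edge coordinates z_{ij} and face coordinates z_{ijk}, and let T* be its dual tetrahedron with edge coordinates z*_{ij}. Then for every even permutation (i,j,k,l) of (1,2,3,4), z*_{ij} = z_{ji} · (1 - z_{ik} z_{jk} z_{lk}) / (1 - 1/(z_{il} z_{jl} z_{kl})) = z_{ji} · (1 + z_{jil}) / (1 + 1/z_{ijk}). -/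
/-! The flag conditions `fᵢ(xᵢ) = 0` collapse the Cauchy–Binet expansion of
`det(fᵢ,fⱼ,f_k) · det(xᵢ,xⱼ,x_k)` to `fᵢ(xⱼ)fⱼ(x_k)f_k(xᵢ) + fᵢ(x_k)fⱼ(xᵢ)f_k(xⱼ)`, that is
`1 + 1/z_{ijk} = det(fᵢ,fⱼ,f_k) · det(xᵢ,xⱼ,x_k) / (fᵢ(xⱼ)fⱼ(x_k)f_k(xᵢ))`.
Using this for the faces `ijk` and `ijl` trades the two line determinants in `z*_{ij}` for point
determinants and pairings, which gives the second formula. The first one follows because the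
product of the three edge coordinates `z_{ik} z_{jk} z_{lk}` of the edges ending at a vertex is
`-z_{jil}`, minus the face coordinate of the opposite face. -/

lemma det3_swap_left (a b c : Fin 3 → ℂ) : det3 b a c = -det3 a b c := by
  simp only [det3, Matrix.det_fin_three, Matrix.of_apply, Matrix.cons_val]; ring

lemma det3_swap_right (a b c : Fin 3 → ℂ) : det3 a c b = -det3 a b c := by
  simp only [det3, Matrix.det_fin_three, Matrix.of_apply, Matrix.cons_val]; ring

lemma det3_rotate (a b c : Fin 3 → ℂ) : det3 b c a = det3 a b c := by
  simp only [det3, Matrix.det_fin_three, Matrix.of_apply, Matrix.cons_val]; ring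

/-- Cauchy–Binet: `det A · det B = det (A Bᵀ)`, expanded along the first row. -/
lemma det3_mul_det3 (a b c d e g : Fin 3 → ℂ) :
    det3 a b c * det3 d e g =
      dot a d * (dot b e * dot c g - dot b g * dot c e)
      - dot a e * (dot b d * dot c g - dot b g * dot c d)
      + dot a g * (dot b d * dot c e - dot b e * dot c d) := by
  simp only [det3, dot, Matrix.det_fin_three, Matrix.of_apply, Matrix.cons_val,
    Fin.sum_univ_three]
  ring

namespace FlagTetra

variable (T : FlagTetra)

lemma det3_f_mul_det3_x (i j k : Fin 4) :
    det3 (T.f i) (T.f j) (T.f k) * det3 (T.x i) (T.x j) (T.x k) =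
      dot (T.f i) (T.x j) * dot (T.f j) (T.x k) * dot (T.f k) (T.x i)
      + dot (T.f i) (T.x k) * dot (T.f j) (T.x i) * dot (T.f k) (T.x j) := by
  rw [det3_mul_det3, T.flag i, T.flag j, T.flag k]; ring

lemma zFace_swap (i j k : Fin 4) : zFace T j i k = 1 / zFace T i j k := by
  rw [zFace, zFace, one_div_div]; ring

lemma one_add_one_div_zFace {i j k : Fin 4} (hij : i ≠ j) (hjk : j ≠ k) (hki : k ≠ i) :
    1 + 1 / zFace T i j k =
      det3 (T.f i) (T.f j) (T.f k) * det3 (T.x i) (T.x j) (T.x k) /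
        (dot (T.f i) (T.x j) * dot (T.f j) (T.x k) * dot (T.f k) (T.x i)) := by
  have := T.generic_pairing i j hij
  have := T.generic_pairing j k hjk
  have := T.generic_pairing k i hki
  rw [det3_f_mul_det3_x, zFace, one_div_div]
  field_simp

lemma zEdge_mul_zEdge_mul_zEdge_s11 {a b c d : Fin 4} (hab : a ≠ b) (hbc : b ≠ c) (hca : c ≠ a)
    (had : a ≠ d) (hbd : b ≠ d) (hcd : c ≠ d) :
    zEdge T a d b c * zEdge T b d c a * zEdge T c d a b = -zFace T a b c := by
  have := T.generic_pts a b d hab hbd had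
  have := T.generic_pts b c d hbc hcd hbd
  have := T.generic_pts c a d hca had hcd
  simp only [zEdge, zFace, det3_swap_right (T.x a) (T.x b), det3_swap_right (T.x b) (T.x c),
    det3_swap_right (T.x c) (T.x a), det3_rotate (T.x a) (T.x b), det3_rotate (T.x b) (T.x c),
    det3_rotate (T.x c) (T.x a)]
  field_simp

lemma zEdgeDual_eq {i j k l : Fin 4} (hij : i ≠ j) (hjk : j ≠ k) (hki : k ≠ i) (hjl : j ≠ l)
    (hli : l ≠ i) :
    zEdgeDual T i j k l = zEdge T j i l k * (1 + zFace T j i l) / (1 + 1 / zFace T i j k) := by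
  have := T.generic_pts i j k hij hjk hki.symm
  have := T.generic_pts i j l hij hjl hli.symm
  have := T.generic_pairing i j hij
  have := T.generic_pairing j k hjk
  have := T.generic_pairing j l hjl
  rw [zFace_swap, T.one_add_one_div_zFace hij hjk hki, T.one_add_one_div_zFace hij hjl hli,
    zEdgeDual, zEdge, det3_swap_left (T.x i) (T.x j) (T.x k), det3_swap_left (T.x i) (T.x j) (T.x l)]
  field_simp

end FlagTetra

theorem zEdgeDual_formula_general (T : VGTetra) (σ : Equiv.Perm (Fin 4)) :
    zEdgeDual T.toFlagTetra (σ 0) (σ 1) (σ 2) (σ 3) =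
      zEdge T.toFlagTetra (σ 1) (σ 0) (σ 3) (σ 2) *
        (1 - zEdge T.toFlagTetra (σ 0) (σ 2) (σ 3) (σ 1) *
             zEdge T.toFlagTetra (σ 1) (σ 2) (σ 0) (σ 3) *
             zEdge T.toFlagTetra (σ 3) (σ 2) (σ 1) (σ 0)) /
        (1 - 1 / (zEdge T.toFlagTetra (σ 0) (σ 3) (σ 1) (σ 2) *
                  zEdge T.toFlagTetra (σ 1) (σ 3) (σ 2) (σ 0) *
                  zEdge T.toFlagTetra (σ 2) (σ 3) (σ 0) (σ 1))) ∧
    zEdgeDual T.toFlagTetra (σ 0) (σ 1) (σ 2) (σ 3) =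
      zEdge T.toFlagTetra (σ 1) (σ 0) (σ 3) (σ 2) *
        (1 + zFace T.toFlagTetra (σ 1) (σ 0) (σ 3)) /
        (1 + 1 / zFace T.toFlagTetra (σ 0) (σ 1) (σ 2)) := by
  have h01 := σ.injective.ne (show (0 : Fin 4) ≠ 1 by decide)
  have h02 := σ.injective.ne (show (0 : Fin 4) ≠ 2 by decide)
  have h03 := σ.injective.ne (show (0 : Fin 4) ≠ 3 by decide)
  have h12 := σ.injective.ne (show (1 : Fin 4) ≠ 2 by decide)
  have h13 := σ.injective.ne (show (1 : Fin 4) ≠ 3 by decide)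
  have h23 := σ.injective.ne (show (2 : Fin 4) ≠ 3 by decide)
  have hdual := T.zEdgeDual_eq h01 h12 h02.symm h13 h03.symm
  refine ⟨?_, hdual⟩
  rw [mul_comm (zEdge _ (σ 0) _ _ _),
    T.zEdge_mul_zEdge_mul_zEdge_s11 h01.symm h03 h13.symm h12 h02 h23.symm,
    T.zEdge_mul_zEdge_mul_zEdge_s11 h01 h12 h02.symm h03 h13 h23,
    sub_neg_eq_add, one_div_neg_eq_neg_one_div, sub_neg_eq_add]
  exact hdual

/-- Duality formula for edge coordinates: for a very generic tetrahedron of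
flags and an even permutation `(i,j,k,l)` of the vertices,
`z*_{ij} = z_{ji}(1 - z_{ik}z_{jk}z_{lk})/(1 - 1/(z_{il}z_{jl}z_{kl}))
        = z_{ji}(1 + z_{jil})/(1 + 1/z_{ijk})`. -/
theorem zEdgeDual_formula (T : VGTetra) (σ : Equiv.Perm (Fin 4))
    (hσ : σ.sign = 1) :
    zEdgeDual T.toFlagTetra (σ 0) (σ 1) (σ 2) (σ 3) =
      zEdge T.toFlagTetra (σ 1) (σ 0) (σ 3) (σ 2) *
        (1 - zEdge T.toFlagTetra (σ 0) (σ 2) (σ 3) (σ 1) *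
             zEdge T.toFlagTetra (σ 1) (σ 2) (σ 0) (σ 3) *
             zEdge T.toFlagTetra (σ 3) (σ 2) (σ 1) (σ 0)) /
        (1 - 1 / (zEdge T.toFlagTetra (σ 0) (σ 3) (σ 1) (σ 2) *
                  zEdge T.toFlagTetra (σ 1) (σ 3) (σ 2) (σ 0) *
                  zEdge T.toFlagTetra (σ 2) (σ 3) (σ 0) (σ 1))) ∧
    zEdgeDual T.toFlagTetra (σ 0) (σ 1) (σ 2) (σ 3) =
      zEdge T.toFlagTetra (σ 1) (σ 0) (σ 3) (σ 2) *
        (1 + zFace T.toFlagTetra (σ 1) (σ 0) (σ 3)) /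
        (1 + 1 / zFace T.toFlagTetra (σ 0) (σ 1) (σ 2)) :=
  zEdgeDual_formula_general T σ
end

section
/- Let z_{ij} (1 ≤ i ≠ j ≤ 4) be complex numbers in C \ {0,1} satisfying the vertex relations z_{ik} = 1/(1 - z_{ij}) and z_{il} = 1 - 1/z_{ij} for each even permutation (i,j,k,l) of (1,2,3,4). Set w_{ij} = z_{ij} z_{ji}. If w₁₂w₁₃w₂₃ ≠ -1 and w₁₃w₂₃ - w₂₃ + 1 ≠ 0, then z₁₂ = w₁₂(w₁₃w₂₃ - w₂₃ + 1)/(w₁₂w₁₃w₂₃ + 1) and z₂₁ = (w₁₂w₁₃w₂₃ + 1)/(w₁₃w₂₃ - w₂₃ + 1). -/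
/-- The `w`-coordinates `w_{ij} = z_{ij} z_{ji}`. -/
noncomputable def wCoord (z : Fin 4 → Fin 4 → ℂ) (i j : Fin 4) : ℂ := z i j * z j i

/-- Expression of the `z`-coordinates of a generic tetrahedron of flags in
terms of the `w`-coordinates (indices from `0`: `z₁₂ = z 0 1`, etc.). -/
theorem z_in_terms_of_w (z : Fin 4 → Fin 4 → ℂ)
    (hz : ∀ i j, i ≠ j → z i j ≠ 0 ∧ z i j ≠ 1)
    (hrel : ∀ σ : Equiv.Perm (Fin 4), σ.sign = 1 →
      z (σ 0) (σ 2) = 1 / (1 - z (σ 0) (σ 1)) ∧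
      z (σ 0) (σ 3) = 1 - 1 / z (σ 0) (σ 1))
    (h₁ : wCoord z 0 1 * wCoord z 0 2 * wCoord z 1 2 ≠ -1)
    (h₂ : wCoord z 0 2 * wCoord z 1 2 - wCoord z 1 2 + 1 ≠ 0) :
    z 0 1 = wCoord z 0 1 * (wCoord z 0 2 * wCoord z 1 2 - wCoord z 1 2 + 1) /
        (wCoord z 0 1 * wCoord z 0 2 * wCoord z 1 2 + 1) ∧
    z 1 0 = (wCoord z 0 1 * wCoord z 0 2 * wCoord z 1 2 + 1) /
        (wCoord z 0 2 * wCoord z 1 2 - wCoord z 1 2 + 1) := by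
  have e02 : z 0 2 = 1 / (1 - z 0 1) := by
    have h := (hrel 1 (by decide)).1
    simpa using h
  have e12 : z 1 2 = 1 - 1 / z 1 0 := by
    have h := (hrel (Equiv.swap 0 1 * Equiv.swap 2 3) (by decide)).2
    rwa [show (Equiv.swap 0 1 * Equiv.swap 2 3 : Equiv.Perm (Fin 4)) 0 = 1 from by decide,
      show (Equiv.swap 0 1 * Equiv.swap 2 3 : Equiv.Perm (Fin 4)) 1 = 0 from by decide,
      show (Equiv.swap 0 1 * Equiv.swap 2 3 : Equiv.Perm (Fin 4)) 3 = 2 from by decide] at h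
  have e21 : z 2 1 = 1 / (1 - z 2 0) := by
    have h := (hrel (Equiv.swap 0 1 * Equiv.swap 0 2) (by decide)).1
    rwa [show (Equiv.swap 0 1 * Equiv.swap 0 2 : Equiv.Perm (Fin 4)) 0 = 2 from by decide,
      show (Equiv.swap 0 1 * Equiv.swap 0 2 : Equiv.Perm (Fin 4)) 1 = 0 from by decide,
      show (Equiv.swap 0 1 * Equiv.swap 0 2 : Equiv.Perm (Fin 4)) 2 = 1 from by decide] at h
  obtain ⟨ha0, ha1⟩ := hz 0 1 (by decide)
  obtain ⟨hb0, hb1⟩ := hz 1 0 (by decide)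
  obtain ⟨hp0, hp1⟩ := hz 2 0 (by decide)
  have ha1' : (1 : ℂ) - z 0 1 ≠ 0 := sub_ne_zero.mpr (Ne.symm ha1)
  have hp1' : (1 : ℂ) - z 2 0 ≠ 0 := sub_ne_zero.mpr (Ne.symm hp1)
  have h₁' : wCoord z 0 1 * wCoord z 0 2 * wCoord z 1 2 + 1 ≠ 0 := by
    intro h; exact h₁ (by linear_combination h)
  constructor
  · rw [eq_div_iff h₁']
    simp only [wCoord, e02, e12, e21]
    field_simp
    ring
  · rw [eq_div_iff h₂]
    simp only [wCoord, e02, e12, e21]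
    field_simp
    ring
end

section
/- Let z ∈ C \ {0,1} and consider the 'hyperbolic' tetrahedron of flags T with all four edge-coordinate parameters equal: z₁₂ = z₂₁ = z₃₄ = z₄₃ = z, arising from four distinct points on CP¹ via the Veronese embedding composed with the quadratic-form polarity. Then all four face coordinates of T equal 1, T is very generic, and T is self-dual: z*_{ij} = z_{ij} for all i ≠ j. Consequently β(T) = β(T*) in P(C). -/
/-- The four points of `ℂP¹` (in homogeneous coordinates) defining the
hyperbolic tetrahedron with cross-ratio `z`. -/
noncomputable def hypPts (z : ℂ) : Fin 4 → ℂ × ℂ := ![(0,1), (1,0), (1,1), (1,z)]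

/-- The Veronese image of a point of `ℂP¹`. -/
noncomputable def veronese (p : ℂ × ℂ) : Fin 3 → ℂ := ![p.1 ^ 2, p.1 * p.2, p.2 ^ 2]

/-- The tangent flag covector of a point of `ℂP¹`, obtained by polarizing the
determinant quadratic form `xz - y²` at the Veronese image. -/
noncomputable def veroneseCov (p : ℂ × ℂ) : Fin 3 → ℂ := ![p.2 ^ 2, -2 * p.1 * p.2, p.1 ^ 2]

section HypAux

/-- The `2×2` cross of two points of `ℂ²`. -/
noncomputable def Wc (p q : ℂ × ℂ) : ℂ := p.1 * q.2 - p.2 * q.1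

lemma dotCV (p q : ℂ × ℂ) : dot (veroneseCov p) (veronese q) = (Wc p q) ^ 2 := by
  simp [dot, veronese, veroneseCov, Wc, Fin.sum_univ_three]; ring

lemma detV (p q r : ℂ × ℂ) :
    det3 (veronese p) (veronese q) (veronese r) = Wc p q * Wc p r * Wc q r := by
  simp [det3, veronese, Wc, Matrix.det_fin_three]; ring

lemma detC (p q r : ℂ × ℂ) :
    det3 (veroneseCov p) (veroneseCov q) (veroneseCov r) =
      2 * (Wc p q * Wc p r * Wc q r) := by
  simp [det3, veroneseCov, Wc, Matrix.det_fin_three]; ring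

lemma hypW_ne {z : ℂ} (hz0 : z ≠ 0) (hz1 : z ≠ 1) :
    ∀ i j : Fin 4, i ≠ j → Wc (hypPts z i) (hypPts z j) ≠ 0 := by
  have h1 : z - 1 ≠ 0 := sub_ne_zero.mpr hz1
  intro i j hij
  fin_cases i <;> fin_cases j <;> simp_all [Wc, hypPts, sub_ne_zero]
  exact fun h => hz1 h.symm

end HypAux

/-- The hyperbolic tetrahedron of flags on the four points
`[0,1], [1,0], [1,1], [1,z]` of `ℂP¹` (via the Veronese embedding and the
polarity of the determinant form) is very generic, has all four edge-coordinate
parameters equal to `z`, all four face coordinates equal to `1`, and is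
self-dual: `z*_{ij} = z_{ij}`; consequently `β(T) = β(T*)` in `P(ℂ)`. -/
theorem hyperbolic_tetra_self_dual (z : ℂ) (hz0 : z ≠ 0) (hz1 : z ≠ 1) :
    ∃ T : VGTetra,
      (∀ i, T.x i = veronese (hypPts z i)) ∧
      (∀ i, T.f i = veroneseCov (hypPts z i)) ∧
      (zEdge T.toFlagTetra 0 1 2 3 = z ∧ zEdge T.toFlagTetra 1 0 3 2 = z ∧
        zEdge T.toFlagTetra 2 3 0 1 = z ∧ zEdge T.toFlagTetra 3 2 1 0 = z) ∧
      (∀ i j k : Fin 4, i ≠ j → j ≠ k → i ≠ k → zFace T.toFlagTetra i j k = 1) ∧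
      (∀ σ : Equiv.Perm (Fin 4), σ.sign = 1 →
        zEdgeDual T.toFlagTetra (σ 0) (σ 1) (σ 2) (σ 3) =
          zEdge T.toFlagTetra (σ 0) (σ 1) (σ 2) (σ 3)) ∧
      (∀ a₁₂ a₂₁ a₃₄ a₄₃ b₁₂ b₂₁ b₃₄ b₄₃ : PBG ℂ,
        (a₁₂ : ℂ) = zEdge T.toFlagTetra 0 1 2 3 →
        (a₂₁ : ℂ) = zEdge T.toFlagTetra 1 0 3 2 →
        (a₃₄ : ℂ) = zEdge T.toFlagTetra 2 3 0 1 →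
        (a₄₃ : ℂ) = zEdge T.toFlagTetra 3 2 1 0 →
        (b₁₂ : ℂ) = zEdgeDual T.toFlagTetra 0 1 2 3 →
        (b₂₁ : ℂ) = zEdgeDual T.toFlagTetra 1 0 3 2 →
        (b₃₄ : ℂ) = zEdgeDual T.toFlagTetra 2 3 0 1 →
        (b₄₃ : ℂ) = zEdgeDual T.toFlagTetra 3 2 1 0 →
        pb a₁₂ + pb a₂₁ + pb a₃₄ + pb a₄₃ = pb b₁₂ + pb b₂₁ + pb b₃₄ + pb b₄₃) := by
  have h1 : z - 1 ≠ 0 := sub_ne_zero.mpr hz1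
  have hWne := hypW_ne hz0 hz1
  set p : Fin 4 → ℂ × ℂ := hypPts z with hp
  have hflag : ∀ i, dot (veroneseCov (p i)) (veronese (p i)) = 0 := by
    intro i; rw [dotCV]; simp [Wc]; ring
  have hpair : ∀ i j, i ≠ j → dot (veroneseCov (p i)) (veronese (p j)) ≠ 0 := by
    intro i j hij; rw [dotCV]; exact pow_ne_zero 2 (hWne i j hij)
  have hpts : ∀ i j k : Fin 4, i ≠ j → j ≠ k → i ≠ k →
      det3 (veronese (p i)) (veronese (p j)) (veronese (p k)) ≠ 0 := by
    intro i j k hij hjk hik; rw [detV]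
    exact mul_ne_zero (mul_ne_zero (hWne i j hij) (hWne i k hik)) (hWne j k hjk)
  set T0 : FlagTetra :=
    ⟨fun i => veronese (p i), fun i => veroneseCov (p i), hflag, hpair, hpts⟩ with hT0
  have hlines : ∀ i j k : Fin 4, i ≠ j → j ≠ k → i ≠ k →
      det3 (T0.f i) (T0.f j) (T0.f k) ≠ 0 := by
    intro i j k hij hjk hik
    show det3 (veroneseCov (p i)) (veroneseCov (p j)) (veroneseCov (p k)) ≠ 0
    rw [detC]
    exact mul_ne_zero two_ne_zero
      (mul_ne_zero (mul_ne_zero (hWne i j hij) (hWne i k hik)) (hWne j k hjk))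
  have key : ∀ i j k l : Fin 4, zEdgeDual T0 i j k l = zEdge T0 i j k l := by
    intro i j k l
    show (dot (veroneseCov (p k)) (veronese (p i)) *
          det3 (veroneseCov (p i)) (veroneseCov (p j)) (veroneseCov (p l))) /
        (dot (veroneseCov (p l)) (veronese (p i)) *
          det3 (veroneseCov (p i)) (veroneseCov (p j)) (veroneseCov (p k))) =
        (dot (veroneseCov (p i)) (veronese (p k)) *
          det3 (veronese (p i)) (veronese (p j)) (veronese (p l))) /
        (dot (veroneseCov (p i)) (veronese (p l)) *
          det3 (veronese (p i)) (veronese (p j)) (veronese (p k)))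
    simp only [dotCV, detV, detC]
    have hn : Wc (p k) (p i) ^ 2 * (2 * (Wc (p i) (p j) * Wc (p i) (p l) * Wc (p j) (p l))) =
        2 * (Wc (p i) (p k) ^ 2 * (Wc (p i) (p j) * Wc (p i) (p l) * Wc (p j) (p l))) := by
      simp [Wc]; ring
    have hd : Wc (p l) (p i) ^ 2 * (2 * (Wc (p i) (p j) * Wc (p i) (p k) * Wc (p j) (p k))) =
        2 * (Wc (p i) (p l) ^ 2 * (Wc (p i) (p j) * Wc (p i) (p k) * Wc (p j) (p k))) := by
      simp [Wc]; ring
    rw [hn, hd, mul_div_mul_left _ _ (two_ne_zero)]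
  refine ⟨⟨T0, hlines⟩, fun i => rfl, fun i => rfl, ?_, ?_, ?_, ?_⟩
  · have hzz : z - z ^ 2 ≠ 0 := by
      have h2 : z * (1 - z) ≠ 0 := mul_ne_zero hz0 (sub_ne_zero.mpr (Ne.symm hz1))
      intro h; exact h2 (by linear_combination h)
    refine ⟨?_, ?_, ?_, ?_⟩ <;>
    · show (dot (veroneseCov (p _)) (veronese (p _)) *
          det3 (veronese (p _)) (veronese (p _)) (veronese (p _))) /
          (dot (veroneseCov (p _)) (veronese (p _)) *
          det3 (veronese (p _)) (veronese (p _)) (veronese (p _))) = z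
      rw [div_eq_iff (mul_ne_zero (hpair _ _ (by decide))
        (hpts _ _ _ (by decide) (by decide) (by decide)))]
      simp only [dotCV, detV]
      simp [Wc, hp, hypPts]
      all_goals ring
  · intro i j k hij hjk hik
    show (dot (veroneseCov (p i)) (veronese (p j)) * dot (veroneseCov (p j)) (veronese (p k)) *
        dot (veroneseCov (p k)) (veronese (p i))) /
        (dot (veroneseCov (p i)) (veronese (p k)) * dot (veroneseCov (p j)) (veronese (p i)) *
        dot (veroneseCov (p k)) (veronese (p j))) = 1
    simp only [dotCV]
    have hnum : Wc (p i) (p j) ^ 2 * Wc (p j) (p k) ^ 2 * Wc (p k) (p i) ^ 2 =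
        Wc (p i) (p k) ^ 2 * Wc (p j) (p i) ^ 2 * Wc (p k) (p j) ^ 2 := by
      simp [Wc]; ring
    rw [hnum]
    exact div_self (mul_ne_zero (mul_ne_zero (pow_ne_zero 2 (hWne i k hik))
      (pow_ne_zero 2 (hWne j i hij.symm))) (pow_ne_zero 2 (hWne k j hjk.symm)))
  · intro σ _
    exact key _ _ _ _
  · intro a₁₂ a₂₁ a₃₄ a₄₃ b₁₂ b₂₁ b₃₄ b₄₃ ha1 ha2 ha3 ha4 hb1 hb2 hb3 hb4
    have e1 : a₁₂ = b₁₂ := Subtype.ext (by rw [ha1, hb1]; exact (key 0 1 2 3).symm)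
    have e2 : a₂₁ = b₂₁ := Subtype.ext (by rw [ha2, hb2]; exact (key 1 0 3 2).symm)
    have e3 : a₃₄ = b₃₄ := Subtype.ext (by rw [ha3, hb3]; exact (key 2 3 0 1).symm)
    have e4 : a₄₃ = b₄₃ := Subtype.ext (by rw [ha4, hb4]; exact (key 3 2 1 0).symm)
    rw [e1, e2, e3, e4]
end
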